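/- For k ∈ ℕ, let X(d) denote the set of vectors x = (x_1,…,x_d) of nonnegative integers with x_1 + 2x_2 + ⋯ + d·x_d = d, and for x ∈ X(d) set c(x) = (x_1+⋯+x_d−1)!/(x_1!⋯x_d!). Then for every x ∈ X(2k−1), the rational number (4k−2)·c(2x) + (2k−1)²·c(x)² is an even integer, where 2x = (2x_1,…,2x_{2k-1},0,…,0) ∈ X(4k−2). -/

import Mathlib

open Finset Nat

/-- 2-adic valuation of `(2n)!`. -/
lemma nu2_fact_double (n : ℕ) :
    ((2 * n)!).factorization 2 = n + (n !).factorization 2 := by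
  induction n with
  | zero => simp
  | succ n ih =>
    have h1 : 2 * (n + 1) = (2 * n) * 1 + 2 := by ring
    have e1 : (2 * (n + 1))! = (2 * n)! * (2 * n + 1) * (2 * n + 2) := by
      have : 2 * (n + 1) = (2 * n + 1) + 1 := by ring
      rw [this, Nat.factorial_succ, Nat.factorial_succ]; ring
    have hodd : ((2 * n + 1) : ℕ).factorization 2 = 0 :=
      Nat.factorization_eq_zero_of_not_dvd (by omega)
    have heven : ((2 * n + 2) : ℕ).factorization 2 = 1 + ((n + 1) : ℕ).factorization 2 := by
      have : (2 * n + 2 : ℕ) = 2 * (n + 1) := by ring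
      rw [this, Nat.factorization_mul (by norm_num) (by omega)]
      simp [Nat.Prime.factorization_self Nat.prime_two]
    have hf : ((n + 1)!).factorization 2 = (n !).factorization 2 + ((n+1):ℕ).factorization 2 := by
      rw [Nat.factorial_succ, Nat.factorization_mul (by omega) (Nat.factorial_ne_zero n)]
      simp [add_comm]
    rw [e1, Nat.factorization_mul (by positivity) (by omega),
      Nat.factorization_mul (Nat.factorial_ne_zero _) (by omega)]
    simp only [Finsupp.add_apply, hodd, heven, ih, hf]
    ring

/-- 2-adic valuation of `(2n+1)!`. -/
lemma nu2_fact_double_succ (n : ℕ) :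
    ((2 * n + 1)!).factorization 2 = n + (n !).factorization 2 := by
  rw [Nat.factorial_succ, Nat.factorization_mul (by omega) (Nat.factorial_ne_zero _)]
  simp [Nat.factorization_eq_zero_of_not_dvd (show ¬ (2:ℕ) ∣ 1+2*n by omega), nu2_fact_double,
    add_comm]

/-- Parity transfer between two multinomial coefficients whose data are related
2-adically as `x ↦ 2x` (up to an odd twist). -/
lemma multinomial_parity {d : ℕ} (f h : Fin d → ℕ)
    (hj : ∀ j, ((h j)!).factorization 2 = f j + ((f j)!).factorization 2)
    (hs : ((∑ j, h j)!).factorization 2 = (∑ j, f j) + ((∑ j, f j)!).factorization 2) :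
    Nat.multinomial univ h % 2 = Nat.multinomial univ f % 2 := by
  have specf := Nat.multinomial_spec univ f
  have spech := Nat.multinomial_spec univ h
  have hposf := Nat.multinomial_pos univ f
  have hposh := Nat.multinomial_pos univ h
  -- valuations
  have vf : (Nat.multinomial univ f).factorization 2 + ∑ j, ((f j)!).factorization 2
      = ((∑ j, f j)!).factorization 2 := by
    rw [← specf, Nat.factorization_mul (Finset.prod_ne_zero_iff.2
        fun j _ => Nat.factorial_ne_zero _) hposf.ne',
      Nat.factorization_prod (fun j _ => Nat.factorial_ne_zero _)]
    simp [add_comm]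
  have vh : (Nat.multinomial univ h).factorization 2 + ∑ j, ((h j)!).factorization 2
      = ((∑ j, h j)!).factorization 2 := by
    rw [← spech, Nat.factorization_mul (Finset.prod_ne_zero_iff.2
        fun j _ => Nat.factorial_ne_zero _) hposh.ne',
      Nat.factorization_prod (fun j _ => Nat.factorial_ne_zero _)]
    simp [add_comm]
  have hsum : ∑ j, ((h j)!).factorization 2
      = (∑ j, f j) + ∑ j, ((f j)!).factorization 2 := by
    rw [← Finset.sum_add_distrib]; exact Finset.sum_congr rfl fun j _ => hj j
  have veq : (Nat.multinomial univ h).factorization 2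
      = (Nat.multinomial univ f).factorization 2 := by omega
  -- parity from valuation
  have dvdh := (Nat.Prime.dvd_iff_one_le_factorization Nat.prime_two hposh.ne').symm
  have dvdf := (Nat.Prime.dvd_iff_one_le_factorization Nat.prime_two hposf.ne').symm
  rcases Nat.even_or_odd (Nat.multinomial univ f) with hev | hod
  · have : 2 ∣ Nat.multinomial univ h := by
      rw [dvdh.symm] at *
      rw [veq]
      exact (Nat.Prime.dvd_iff_one_le_factorization Nat.prime_two hposf.ne').1 hev.two_dvd
    rw [Nat.mod_eq_zero_of_dvd this, Nat.mod_eq_zero_of_dvd hev.two_dvd]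
  · have h2 : ¬ 2 ∣ Nat.multinomial univ f := by
      rw [Nat.two_dvd_ne_zero]; exact Nat.odd_iff.1 hod
    have h1 : ¬ 2 ∣ Nat.multinomial univ h := by
      rw [Nat.Prime.dvd_iff_one_le_factorization Nat.prime_two hposh.ne', veq,
        ← Nat.Prime.dvd_iff_one_le_factorization Nat.prime_two hposf.ne']
      exact h2
    have := Nat.odd_iff.1 hod
    have := Nat.odd_iff.1 (Nat.odd_iff.2 (by omega : Nat.multinomial univ h % 2 = 1))
    omega

theorem stmt18 (k : ℕ) (hk : 1 ≤ k) (x : Fin (2 * k - 1) → ℕ)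
    (hx : ∑ i, (i.1 + 1) * x i = 2 * k - 1) :
    ∃ z : ℤ,
      (4 * (k : ℚ) - 2) *
          ((Nat.factorial (2 * (∑ i, x i) - 1) : ℚ) / ∏ i, (Nat.factorial (2 * x i) : ℚ)) +
        (2 * (k : ℚ) - 1) ^ 2 *
          ((Nat.factorial ((∑ i, x i) - 1) : ℚ) / ∏ i, (Nat.factorial (x i) : ℚ)) ^ 2 =
      2 * z := by
  classical
  set m := ∑ i, x i with hm
  have hm1 : 1 ≤ m := by
    by_contra h
    have hm0 : m = 0 := by omega
    have hall : ∀ i ∈ Finset.univ, x i = 0 := by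
      rw [← Finset.sum_eq_zero_iff]; exact hm0.symm ▸ hm.symm
    have : ∑ i, (i.1 + 1) * x i = 0 :=
      Finset.sum_eq_zero fun i hi => by rw [hall i (Finset.mem_univ i), mul_zero]
    omega
  have hxle : ∀ i, x i ≤ m := fun i =>
    hm ▸ Finset.single_le_sum (fun j _ => Nat.zero_le _) (Finset.mem_univ i)
  set T : Fin (2 * k - 1) → ℕ := fun i =>
    if x i = 0 then 0 else Nat.multinomial Finset.univ (Function.update x i (x i - 1)) with hT
  set U : Fin (2 * k - 1) → ℕ := fun i =>
    if x i = 0 then 0 else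
      Nat.multinomial Finset.univ (Function.update (fun j => 2 * x j) i (2 * x i - 1)) with hU
  have prod_upd : ∀ (g : Fin (2 * k - 1) → ℕ) (i : Fin (2 * k - 1)) (b : ℕ),
      ∏ j, ((Function.update g i b) j)! = b ! * ∏ j ∈ Finset.univ.erase i, (g j)! := by
    intro g i b
    rw [← Finset.mul_prod_erase Finset.univ _ (Finset.mem_univ i), Function.update_self]
    congr 1
    exact Finset.prod_congr rfl fun j hj => by
      rw [Function.update_of_ne (Finset.ne_of_mem_erase hj)]
  have sum_upd : ∀ (g : Fin (2 * k - 1) → ℕ) (i : Fin (2 * k - 1)) (b : ℕ),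
      ∑ j, (Function.update g i b) j = b + ∑ j ∈ Finset.univ.erase i, g j := by
    intro g i b
    rw [← Finset.add_sum_erase Finset.univ _ (Finset.mem_univ i), Function.update_self]
    congr 1
    exact Finset.sum_congr rfl fun j hj => by
      rw [Function.update_of_ne (Finset.ne_of_mem_erase hj)]
  have hsx : ∀ i : Fin (2 * k - 1), ∑ j ∈ Finset.univ.erase i, x j = m - x i := by
    intro i
    have := Finset.add_sum_erase Finset.univ x (Finset.mem_univ i)
    rw [← hm] at this
    omega
  have hsy : ∀ i : Fin (2 * k - 1), ∑ j ∈ Finset.univ.erase i, 2 * x j = 2 * m - 2 * x i := by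
    intro i
    rw [← Finset.mul_sum, hsx i]
    have := hxle i; omega
  -- key integer identities
  have key1 : ∀ i, x i * (m - 1)! = T i * ∏ j, (x j)! := by
    intro i
    by_cases h0 : x i = 0
    · simp [hT, h0]
    · simp only [hT, if_neg h0]
      have spec := Nat.multinomial_spec Finset.univ (Function.update x i (x i - 1))
      rw [prod_upd, sum_upd, hsx i] at spec
      have hsum : x i - 1 + (m - x i) = m - 1 := by have := hxle i; omega
      rw [hsum] at spec
      rw [← spec,
        ← Finset.mul_prod_erase Finset.univ (fun j => (x j)!) (Finset.mem_univ i),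
        ← Nat.mul_factorial_pred h0]
      simp [mul_comm, mul_left_comm, mul_assoc]
  have key2 : ∀ i, (2 * x i) * (2 * m - 1)! = U i * ∏ j, (2 * x j)! := by
    intro i
    by_cases h0 : x i = 0
    · simp [hU, h0]
    · simp only [hU, if_neg h0]
      have spec := Nat.multinomial_spec Finset.univ
        (Function.update (fun j => 2 * x j) i (2 * x i - 1))
      rw [prod_upd, sum_upd, hsy i] at spec
      have hsum : 2 * x i - 1 + (2 * m - 2 * x i) = 2 * m - 1 := by have := hxle i; omega
      rw [hsum] at spec
      rw [← spec,
        ← Finset.mul_prod_erase Finset.univ (fun j => (2 * x j)!) (Finset.mem_univ i),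
        ← Nat.mul_factorial_pred (by omega : 2 * x i ≠ 0)]
      simp [mul_comm, mul_left_comm, mul_assoc]
  -- parity
  have parity : ∀ i, U i % 2 = T i % 2 := by
    intro i
    by_cases h0 : x i = 0
    · simp [hT, hU, h0]
    · simp only [hT, hU, if_neg h0]
      apply multinomial_parity
      · intro j
        by_cases hji : j = i
        · subst hji
          rw [Function.update_self, Function.update_self]
          have h1 : 2 * x j - 1 = 2 * (x j - 1) + 1 := by omega
          rw [h1]
          exact nu2_fact_double_succ _
        · rw [Function.update_of_ne hji, Function.update_of_ne hji]
          exact nu2_fact_double (x j)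
      · rw [sum_upd, sum_upd, hsy i, hsx i]
        have h1 : 2 * x i - 1 + (2 * m - 2 * x i) = 2 * (m - 1) + 1 := by
          have := hxle i; omega
        have h2 : x i - 1 + (m - x i) = m - 1 := by have := hxle i; omega
        rw [h1, h2]
        exact nu2_fact_double_succ (m - 1)
  set A := ∑ i, (i.1 + 1) * T i with hA
  set B := ∑ i, (i.1 + 1) * U i with hB
  have hBA : B % 2 = A % 2 := by
    have hcon : ∀ i ∈ Finset.univ, (i.1 + 1) * U i % 2 = (i.1 + 1) * T i % 2 :=
      fun i _ => by rw [Nat.mul_mod, parity i, ← Nat.mul_mod]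
    rw [hA, hB, Finset.sum_nat_mod, Finset.sum_congr rfl hcon, ← Finset.sum_nat_mod]
  have hA2 : A ^ 2 % 2 = A % 2 := by
    rcases Nat.even_or_odd A with h | h
    · obtain ⟨c, hc⟩ := h
      have h2 : A ^ 2 = 2 * (c * A) := by rw [hc]; ring
      omega
    · obtain ⟨c, hc⟩ := h
      have h2 : A ^ 2 = 2 * (2 * c * c + 2 * c) + 1 := by rw [hc]; ring
      omega
  obtain ⟨r, hr⟩ : ∃ r, B + A ^ 2 = 2 * r := ⟨(B + A ^ 2) / 2, by omega⟩
  -- rational identities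
  have hP : (∏ i, ((x i)! : ℚ)) ≠ 0 :=
    Finset.prod_ne_zero_iff.2 fun i _ => Nat.cast_ne_zero.2 (Nat.factorial_ne_zero _)
  have hP2 : (∏ i, (((2 * x i))! : ℚ)) ≠ 0 :=
    Finset.prod_ne_zero_iff.2 fun i _ => Nat.cast_ne_zero.2 (Nat.factorial_ne_zero _)
  have keyQ1 : ∀ i, (x i : ℚ) * ((m - 1)! : ℚ) / (∏ j, ((x j)! : ℚ)) = (T i : ℚ) := by
    intro i
    have h := key1 i
    have hq : (x i : ℚ) * ((m - 1)! : ℚ) = (T i : ℚ) * (∏ j, ((x j)! : ℚ)) := by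
      exact_mod_cast congrArg (Nat.cast : ℕ → ℚ) h
    rw [hq, mul_div_cancel_right₀ _ hP]
  have keyQ2 : ∀ i, (2 * (x i : ℚ)) * ((2 * m - 1)! : ℚ) / (∏ j, (((2 * x j))! : ℚ))
      = (U i : ℚ) := by
    intro i
    have h := key2 i
    have hq : ((2 * x i : ℕ) : ℚ) * ((2 * m - 1)! : ℚ)
        = (U i : ℚ) * (∏ j, (((2 * x j))! : ℚ)) := by
      exact_mod_cast congrArg (Nat.cast : ℕ → ℚ) h
    push_cast at hq
    rw [hq, mul_div_cancel_right₀ _ hP2]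
  have hxQ : ∑ i, ((i.1 : ℚ) + 1) * (x i : ℚ) = ((2 * k - 1 : ℕ) : ℚ) := by
    have h := congrArg (Nat.cast : ℕ → ℚ) hx
    push_cast at h
    exact h
  have e1 : ((2 * k - 1 : ℕ) : ℚ) * (((m - 1)! : ℚ) / ∏ j, ((x j)! : ℚ)) = (A : ℚ) := by
    rw [← hxQ, Finset.sum_mul]
    have : (A : ℚ) = ∑ i, ((i.1 : ℚ) + 1) * (T i : ℚ) := by rw [hA]; push_cast; rfl
    rw [this]
    refine Finset.sum_congr rfl fun i _ => ?_
    calc ((i.1 : ℚ) + 1) * (x i : ℚ) * (((m - 1)! : ℚ) / ∏ j, ((x j)! : ℚ))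
        = ((i.1 : ℚ) + 1) * ((x i : ℚ) * ((m - 1)! : ℚ) / ∏ j, ((x j)! : ℚ)) := by ring
      _ = ((i.1 : ℚ) + 1) * (T i : ℚ) := by rw [keyQ1 i]
  have e2 : (2 * ((2 * k - 1 : ℕ) : ℚ)) * (((2 * m - 1)! : ℚ) / ∏ j, (((2 * x j))! : ℚ))
      = (B : ℚ) := by
    have h2 : 2 * ((2 * k - 1 : ℕ) : ℚ) = ∑ i, ((i.1 : ℚ) + 1) * (2 * (x i : ℚ)) := by
      rw [← hxQ, Finset.mul_sum]
      exact Finset.sum_congr rfl fun i _ => by ring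
    rw [h2, Finset.sum_mul]
    have : (B : ℚ) = ∑ i, ((i.1 : ℚ) + 1) * (U i : ℚ) := by rw [hB]; push_cast; rfl
    rw [this]
    refine Finset.sum_congr rfl fun i _ => ?_
    calc ((i.1 : ℚ) + 1) * (2 * (x i : ℚ)) * (((2 * m - 1)! : ℚ) / ∏ j, (((2 * x j))! : ℚ))
        = ((i.1 : ℚ) + 1) * ((2 * (x i : ℚ)) * ((2 * m - 1)! : ℚ) / ∏ j, (((2 * x j))! : ℚ))
          := by ring
      _ = ((i.1 : ℚ) + 1) * (U i : ℚ) := by rw [keyQ2 i]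
  -- finish
  refine ⟨(r : ℤ), ?_⟩
  have hc1 : (2 * (k : ℚ) - 1) = ((2 * k - 1 : ℕ) : ℚ) := by
    rw [Nat.cast_sub (by omega : 1 ≤ 2 * k)]
    push_cast; ring
  have hc2 : (4 * (k : ℚ) - 2) = 2 * ((2 * k - 1 : ℕ) : ℚ) := by
    rw [Nat.cast_sub (by omega : 1 ≤ 2 * k)]
    push_cast; ring
  rw [hc1, hc2, ← mul_pow, e1, e2]
  have hfin : (B : ℚ) + (A : ℚ) ^ 2 = 2 * (r : ℚ) := by exact_mod_cast hr
  push_cast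
  linarith [hfin]
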